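/- Every closed ACP_drt^τ term is provably equal to a ts-basic term: for each closed ACP_drt^τ term t there exists a term t' generated by σⁿ(\underline{a}) (a ∈ A ∪ {τ,δ}, n ∈ ℕ), σⁿ(\underline{a})·t'' (a ∈ A ∪ {τ}, t'' ts-basic), and alternative composition of ts-basic terms, such that t = t' is derivable from the axioms of ACP_drt^τ. -/
import Mathlib

set_option autoImplicit true

/-- Actions extended with the silent action τ and deadlock δ. -/
inductive ATD (A : Type) : Type where
  | act : A → ATD A
  | tau : ATD A
  | delta : ATD A

/-- Terms of ACP_drt^τ with guarded recursion (variables are natural numbers,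
a recursive specification is a total function from variables to terms). -/
inductive Tm (A : Type) : Type where
  | und : ATD A → Tm A            -- undelayable action/silent step/deadlock constant
  | alt : Tm A → Tm A → Tm A      -- alternative composition +
  | seq : Tm A → Tm A → Tm A      -- sequential composition ·
  | delay : Tm A → Tm A           -- one-time-slice delay σ
  | par : Tm A → Tm A → Tm A      -- parallel composition ∥
  | lm : Tm A → Tm A → Tm A       -- left merge ⌊
  | cm : Tm A → Tm A → Tm A       -- communication merge |
  | encap : Set A → Tm A → Tm A   -- encapsulation ∂_H
  | abstr : Set A → Tm A → Tm A   -- abstraction τ_I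
  | timeout : Tm A → Tm A         -- current-time-slice time-out ν
  | var : ℕ → Tm A                -- variable
  | recc : (ℕ → Tm A) → ℕ → Tm A   -- recursion constant ⟨X|E⟩
  | shift : Tm A → Tm A           -- one-time-slice shift ω (auxiliary)
  | tfp : Tm A → Tm A             -- time-free projection π_tf (auxiliary)

namespace Tm
variable {A : Type}

/-- Apply an assignment of terms to variables (leaving recursion constants,
whose variables are bound, untouched). -/
def asg (θ : ℕ → Tm A) : Tm A → Tm A
  | und a => und a
  | alt t u => alt (asg θ t) (asg θ u)
  | seq t u => seq (asg θ t) (asg θ u)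
  | delay t => delay (asg θ t)
  | par t u => par (asg θ t) (asg θ u)
  | lm t u => lm (asg θ t) (asg θ u)
  | cm t u => cm (asg θ t) (asg θ u)
  | encap H t => encap H (asg θ t)
  | abstr I t => abstr I (asg θ t)
  | timeout t => timeout (asg θ t)
  | var X => θ X
  | recc E X => recc E X
  | shift t => shift (asg θ t)
  | tfp t => tfp (asg θ t)

/-- ⟨t|E⟩ : replace each variable Y of t by the recursion constant ⟨Y|E⟩. -/
def sub (E : ℕ → Tm A) (t : Tm A) : Tm A := asg (fun Y => recc E Y) t

/-- n-fold one-time-slice delay σⁿ. -/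
def delayN : ℕ → Tm A → Tm A
  | 0, t => t
  | n+1, t => delay (delayN n t)

/-- n-fold one-time-slice shift ωⁿ. -/
def shiftN : ℕ → Tm A → Tm A
  | 0, t => t
  | n+1, t => shift (shiftN n t)

/-- Syntactically guarded term: no abstraction operator occurs and each variable
occurrence is within a subterm a·t' (a an observable action) or σ(t'). -/
def Guarded : Tm A → Prop
  | und _ => True
  | alt t u => Guarded t ∧ Guarded u
  | seq t u => Guarded t ∧ (Guarded u ∨ ∃ a : A, t = und (ATD.act a))
  | delay _ => True
  | par t u => Guarded t ∧ Guarded u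
  | lm t u => Guarded t ∧ Guarded u
  | cm t u => Guarded t ∧ Guarded u
  | encap _ t => Guarded t
  | abstr _ _ => False
  | timeout t => Guarded t
  | var _ => False
  | recc _ _ => True
  | shift t => Guarded t
  | tfp _ => False

/-- Guarded recursive specification. -/
def GuardedSpec (E : ℕ → Tm A) : Prop := ∀ Y, Guarded (E Y)

/-- No free variables (variables inside recursion constants are bound). -/
def NoFreeVar : Tm A → Prop
  | und _ => True
  | alt t u => NoFreeVar t ∧ NoFreeVar u
  | seq t u => NoFreeVar t ∧ NoFreeVar u
  | delay t => NoFreeVar t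
  | par t u => NoFreeVar t ∧ NoFreeVar u
  | lm t u => NoFreeVar t ∧ NoFreeVar u
  | cm t u => NoFreeVar t ∧ NoFreeVar u
  | encap _ t => NoFreeVar t
  | abstr _ t => NoFreeVar t
  | timeout t => NoFreeVar t
  | var _ => False
  | recc _ _ => True
  | shift t => NoFreeVar t
  | tfp t => NoFreeVar t

/-- Proper ACP_drt^τ+REC term body: the auxiliary operators ω and π_tf do not
occur and all recursive specifications occurring in it are guarded. -/
def PT : Tm A → Prop
  | und _ => True
  | alt t u => PT t ∧ PT u
  | seq t u => PT t ∧ PT u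
  | delay t => PT t
  | par t u => PT t ∧ PT u
  | lm t u => PT t ∧ PT u
  | cm t u => PT t ∧ PT u
  | encap _ t => PT t
  | abstr _ t => PT t
  | timeout t => PT t
  | var _ => True
  | recc E _ => ∀ Y, Guarded (E Y) ∧ PT (E Y)
  | shift _ => False
  | tfp _ => False

/-- Element of 𝒫: closed ACP_drt^τ+REC term. -/
def PTm (t : Tm A) : Prop := PT t ∧ NoFreeVar t

/-- Closed ACP_drt^τ term (recursion-free, no variables, no auxiliary operators). -/
def Plain : Tm A → Prop
  | und _ => True
  | alt t u => Plain t ∧ Plain u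
  | seq t u => Plain t ∧ Plain u
  | delay t => Plain t
  | par t u => Plain t ∧ Plain u
  | lm t u => Plain t ∧ Plain u
  | cm t u => Plain t ∧ Plain u
  | encap _ t => Plain t
  | abstr _ t => Plain t
  | timeout t => Plain t
  | var _ => False
  | recc _ _ => False
  | shift _ => False
  | tfp _ => False

/-- No recursion constant occurs. -/
def RecFree : Tm A → Prop
  | und _ => True
  | alt t u => RecFree t ∧ RecFree u
  | seq t u => RecFree t ∧ RecFree u
  | delay t => RecFree t
  | par t u => RecFree t ∧ RecFree u
  | lm t u => RecFree t ∧ RecFree u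
  | cm t u => RecFree t ∧ RecFree u
  | encap _ t => RecFree t
  | abstr _ t => RecFree t
  | timeout t => RecFree t
  | var _ => True
  | recc _ _ => False
  | shift t => RecFree t
  | tfp t => RecFree t

/-- No abstraction operator occurs. -/
def AbstrFree : Tm A → Prop
  | und _ => True
  | alt t u => AbstrFree t ∧ AbstrFree u
  | seq t u => AbstrFree t ∧ AbstrFree u
  | delay t => AbstrFree t
  | par t u => AbstrFree t ∧ AbstrFree u
  | lm t u => AbstrFree t ∧ AbstrFree u
  | cm t u => AbstrFree t ∧ AbstrFree u
  | encap _ t => AbstrFree t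
  | abstr _ _ => False
  | timeout t => AbstrFree t
  | var _ => True
  | recc E _ => ∀ Y, AbstrFree (E Y)
  | shift t => AbstrFree t
  | tfp t => AbstrFree t

/-- Term of BPA_drt^τ+REC: no ∥, ⌊, |, ∂_H and no auxiliary operators. -/
def BpaP : Tm A → Prop
  | und _ => True
  | alt t u => BpaP t ∧ BpaP u
  | seq t u => BpaP t ∧ BpaP u
  | delay t => BpaP t
  | par _ _ => False
  | lm _ _ => False
  | cm _ _ => False
  | encap _ _ => False
  | abstr _ t => BpaP t
  | timeout t => BpaP t
  | var _ => True
  | recc E _ => ∀ Y, BpaP (E Y)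
  | shift _ => False
  | tfp _ => False

/-- The delayable action a = ⟨X | X = \underline{a} + σ(X)⟩. -/
def dact (a : ATD A) : Tm A := recc (fun _ => alt (und a) (delay (var 0))) 0

end Tm

/-- Finite alternative composition (the empty sum is \underline{δ}). -/
def altList {A : Type} : List (Tm A) → Tm A
  | [] => .und .delta
  | [t] => t
  | t :: ts => .alt t (altList ts)

/-- Finite parallel composition (the empty composition is \underline{δ}). -/
def parList {A : Type} : List (Tm A) → Tm A
  | [] => .und .delta
  | [t] => t
  | t :: ts => .par t (parList ts)

/-- Basic terms over ACP_drt^τ. -/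
inductive Basic {A : Type} : Tm A → Prop where
  | und (a : ATD A) : Basic (.und a)
  | pre (a : ATD A) (h : a ≠ ATD.delta) {t : Tm A} : Basic t → Basic (.seq (.und a) t)
  | delay {t : Tm A} : Basic t → Basic (.delay t)
  | alt {t u : Tm A} : Basic t → Basic u → Basic (.alt t u)

/-- ts-basic terms over ACP_drt^τ. -/
inductive TsBasic {A : Type} : Tm A → Prop where
  | und (a : ATD A) (n : ℕ) : TsBasic (Tm.delayN n (.und a))
  | pre (a : ATD A) (n : ℕ) (h : a ≠ ATD.delta) {t : Tm A} :
      TsBasic t → TsBasic (.seq (Tm.delayN n (.und a)) t)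
  | alt {t u : Tm A} : TsBasic t → TsBasic u → TsBasic (.alt t u)

/-- Linear terms. -/
inductive Linear {A : Type} : Tm A → Prop where
  | und (a : ATD A) : Linear (.und a)
  | pre (a : ATD A) (h : a ≠ ATD.delta) (X : ℕ) : Linear (.seq (.und a) (.var X))
  | delay (X : ℕ) : Linear (.delay (.var X))
  | alt {t u : Tm A} : Linear t → Linear u → Linear (.alt t u)

/-- Derivability in (conditional) equational logic from the axioms of ACP_drt^τ,
optionally (recOK) with the axioms RDP and RSP for guarded recursion, and
optionally with additional axioms Ax. -/
inductive Deriv {A : Type} (γ : ATD A → ATD A → ATD A) (Ax : Tm A → Tm A → Prop)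
    (recOK : Bool) : Tm A → Tm A → Prop where
  | refl (t) : Deriv γ Ax recOK t t
  | symm {t u} : Deriv γ Ax recOK t u → Deriv γ Ax recOK u t
  | trans {t u v} : Deriv γ Ax recOK t u → Deriv γ Ax recOK u v → Deriv γ Ax recOK t v
  | altCongr {t t' u u'} : Deriv γ Ax recOK t t' → Deriv γ Ax recOK u u' →
      Deriv γ Ax recOK (.alt t u) (.alt t' u')
  | seqCongr {t t' u u'} : Deriv γ Ax recOK t t' → Deriv γ Ax recOK u u' →
      Deriv γ Ax recOK (.seq t u) (.seq t' u')
  | delayCongr {t t'} : Deriv γ Ax recOK t t' → Deriv γ Ax recOK (.delay t) (.delay t')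
  | parCongr {t t' u u'} : Deriv γ Ax recOK t t' → Deriv γ Ax recOK u u' →
      Deriv γ Ax recOK (.par t u) (.par t' u')
  | lmCongr {t t' u u'} : Deriv γ Ax recOK t t' → Deriv γ Ax recOK u u' →
      Deriv γ Ax recOK (.lm t u) (.lm t' u')
  | cmCongr {t t' u u'} : Deriv γ Ax recOK t t' → Deriv γ Ax recOK u u' →
      Deriv γ Ax recOK (.cm t u) (.cm t' u')
  | encapCongr (H) {t t'} : Deriv γ Ax recOK t t' →
      Deriv γ Ax recOK (.encap H t) (.encap H t')
  | abstrCongr (I) {t t'} : Deriv γ Ax recOK t t' →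
      Deriv γ Ax recOK (.abstr I t) (.abstr I t')
  | timeoutCongr {t t'} : Deriv γ Ax recOK t t' →
      Deriv γ Ax recOK (.timeout t) (.timeout t')
  | shiftCongr {t t'} : Deriv γ Ax recOK t t' → Deriv γ Ax recOK (.shift t) (.shift t')
  | tfpCongr {t t'} : Deriv γ Ax recOK t t' → Deriv γ Ax recOK (.tfp t) (.tfp t')
  | extra {t u} : Ax t u → Deriv γ Ax recOK t u
  -- A1–A7DR
  | A1 (x y) : Deriv γ Ax recOK (.alt x y) (.alt y x)
  | A2 (x y z) : Deriv γ Ax recOK (.alt (.alt x y) z) (.alt x (.alt y z))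
  | A3 (x) : Deriv γ Ax recOK (.alt x x) x
  | A4 (x y z) : Deriv γ Ax recOK (.seq (.alt x y) z) (.alt (.seq x z) (.seq y z))
  | A5 (x y z) : Deriv γ Ax recOK (.seq (.seq x y) z) (.seq x (.seq y z))
  | A6DR (x) : Deriv γ Ax recOK (.alt x (.und .delta)) x
  | A7DR (x) : Deriv γ Ax recOK (.seq (.und .delta) x) (.und .delta)
  -- DRT1, DRT2
  | DRT1 (x y) : Deriv γ Ax recOK (.alt (.delay x) (.delay y)) (.delay (.alt x y))
  | DRT2 (x y) : Deriv γ Ax recOK (.seq (.delay x) y) (.delay (.seq x y))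
  -- encapsulation
  | D1DR (a : ATD A) (H : Set A) (h : ∀ b, a = ATD.act b → b ∉ H) :
      Deriv γ Ax recOK (.encap H (.und a)) (.und a)
  | D2DR (b : A) (H : Set A) (h : b ∈ H) :
      Deriv γ Ax recOK (.encap H (.und (.act b))) (.und .delta)
  | D3 (H x y) : Deriv γ Ax recOK (.encap H (.alt x y)) (.alt (.encap H x) (.encap H y))
  | D4 (H x y) : Deriv γ Ax recOK (.encap H (.seq x y)) (.seq (.encap H x) (.encap H y))
  | DRD (H x) : Deriv γ Ax recOK (.encap H (.delay x)) (.delay (.encap H x))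
  -- abstraction
  | TI1DR (a : ATD A) (I : Set A) (h : ∀ b, a = ATD.act b → b ∉ I) :
      Deriv γ Ax recOK (.abstr I (.und a)) (.und a)
  | TI2DR (b : A) (I : Set A) (h : b ∈ I) :
      Deriv γ Ax recOK (.abstr I (.und (.act b))) (.und .tau)
  | TI3 (I x y) : Deriv γ Ax recOK (.abstr I (.alt x y)) (.alt (.abstr I x) (.abstr I y))
  | TI4 (I x y) : Deriv γ Ax recOK (.abstr I (.seq x y)) (.seq (.abstr I x) (.abstr I y))
  | DRTI (I x) : Deriv γ Ax recOK (.abstr I (.delay x)) (.delay (.abstr I x))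
  -- merge
  | CM1 (x y) : Deriv γ Ax recOK (.par x y) (.alt (.alt (.lm x y) (.lm y x)) (.cm x y))
  | CM2DR (a : ATD A) (x) : Deriv γ Ax recOK (.lm (.und a) x) (.seq (.und a) x)
  | CM3DR (a : ATD A) (x y) :
      Deriv γ Ax recOK (.lm (.seq (.und a) x) y) (.seq (.und a) (.par x y))
  | DRCM1 (x y) : Deriv γ Ax recOK (.lm (.delay x) (.timeout y)) (.und .delta)
  | DRCM2 (x y z) : Deriv γ Ax recOK (.lm (.delay x) (.alt (.timeout y) (.delay z)))
      (.delay (.lm x z))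
  | CM4 (x y z) : Deriv γ Ax recOK (.lm (.alt x y) z) (.alt (.lm x z) (.lm y z))
  | CM5DR (a b : ATD A) (x) : Deriv γ Ax recOK (.cm (.seq (.und a) x) (.und b))
      (.seq (.cm (.und a) (.und b)) x)
  | CM6DR (a b : ATD A) (x) : Deriv γ Ax recOK (.cm (.und a) (.seq (.und b) x))
      (.seq (.cm (.und a) (.und b)) x)
  | CM7DR (a b : ATD A) (x y) : Deriv γ Ax recOK (.cm (.seq (.und a) x) (.seq (.und b) y))
      (.seq (.cm (.und a) (.und b)) (.par x y))
  | DRCM3 (x y) : Deriv γ Ax recOK (.cm (.timeout x) (.delay y)) (.und .delta)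
  | DRCM4 (x y) : Deriv γ Ax recOK (.cm (.delay x) (.timeout y)) (.und .delta)
  | DRCM5 (x y) : Deriv γ Ax recOK (.cm (.delay x) (.delay y)) (.delay (.cm x y))
  | CM8 (x y z) : Deriv γ Ax recOK (.cm (.alt x y) z) (.alt (.cm x z) (.cm y z))
  | CM9 (x y z) : Deriv γ Ax recOK (.cm x (.alt y z)) (.alt (.cm x y) (.cm x z))
  | CFDR (a b : ATD A) : Deriv γ Ax recOK (.cm (.und a) (.und b)) (.und (γ a b))
  -- time-out
  | DRTO1 (a : ATD A) : Deriv γ Ax recOK (.timeout (.und a)) (.und a)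
  | DRTO2 (x y) : Deriv γ Ax recOK (.timeout (.alt x y)) (.alt (.timeout x) (.timeout y))
  | DRTO3 (x y) : Deriv γ Ax recOK (.timeout (.seq x y)) (.seq (.timeout x) y)
  | DRTO4 (x) : Deriv γ Ax recOK (.timeout (.delay x)) (.und .delta)
  -- silent step
  | DRB1 (a : ATD A) : Deriv γ Ax recOK (.seq (.und a) (.und .tau)) (.und a)
  | DRB2 (a : ATD A) (x y) : Deriv γ Ax recOK
      (.seq (.und a) (.alt (.seq (.und .tau) (.alt (.timeout x) y)) (.timeout x)))
      (.seq (.und a) (.alt (.timeout x) y))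
  | DRB3 (a : ATD A) (x y) : Deriv γ Ax recOK
      (.seq (.und a) (.alt (.seq (.und .tau) (.alt (.timeout x) y)) y))
      (.seq (.und a) (.alt (.timeout x) y))
  | DRB4 (a : ATD A) (x y) : Deriv γ Ax recOK
      (.seq (.und a) (.alt (.delay (.seq (.und .tau) x)) (.timeout y)))
      (.seq (.und a) (.alt (.delay x) (.timeout y)))
  -- recursion
  | RDP (E : ℕ → Tm A) (X : ℕ) (hrec : recOK = true) (hg : Tm.GuardedSpec E) :
      Deriv γ Ax recOK (.recc E X) (Tm.sub E (E X))
  | RSP (E : ℕ → Tm A) (θ : ℕ → Tm A) (X : ℕ) (hrec : recOK = true)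
      (hg : Tm.GuardedSpec E) (h : ∀ Y, Deriv γ Ax recOK (θ Y) (Tm.asg θ (E Y))) :
      Deriv γ Ax recOK (θ X) (.recc E X)

/-- The empty set of additional axioms. -/
def NoAx {A : Type} : Tm A → Tm A → Prop := fun _ _ => False

/-! ### Two-phase structural operational semantics -/

/-- Map a transition label (A ∪ {τ}, with `none` = τ) into A ∪ {τ,δ}. -/
def toATD {A : Type} : Option A → ATD A
  | some a => ATD.act a
  | none => ATD.tau

/-- Combination of the residues of two synchronously performed actions
(`none` stands for successful termination √). -/
def parOpt {A : Type} : Option (Tm A) → Option (Tm A) → Option (Tm A)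
  | some x, some y => some (.par x y)
  | some x, none => some x
  | none, some y => some y
  | none, none => none

/-- Capability of idling till the next time slice. -/
inductive CanIdle {A : Type} : Tm A → Prop where
  | delay (t : Tm A) : CanIdle (.delay t)
  | altL {t u : Tm A} : CanIdle t → CanIdle (.alt t u)
  | altR {t u : Tm A} : CanIdle u → CanIdle (.alt t u)
  | seq {t : Tm A} (u : Tm A) : CanIdle t → CanIdle (.seq t u)
  | par {t u : Tm A} : CanIdle t → CanIdle u → CanIdle (.par t u)
  | lm {t u : Tm A} : CanIdle t → CanIdle u → CanIdle (.lm t u)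
  | cm {t u : Tm A} : CanIdle t → CanIdle u → CanIdle (.cm t u)
  | encap (H : Set A) {t : Tm A} : CanIdle t → CanIdle (.encap H t)
  | abstr (I : Set A) {t : Tm A} : CanIdle t → CanIdle (.abstr I t)
  | recc {E : ℕ → Tm A} {X : ℕ} : Tm.GuardedSpec E →
      CanIdle (Tm.sub E (E X)) → CanIdle (.recc E X)

/-- σ-transitions of the two-phase semantics (Table 3). -/
inductive SStep {A : Type} : Tm A → Tm A → Prop where
  | delay (t : Tm A) : SStep (.delay t) t
  | altL {t t' u : Tm A} : SStep t t' → ¬ CanIdle u → SStep (.alt t u) t'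
  | altR {t u u' : Tm A} : ¬ CanIdle t → SStep u u' → SStep (.alt t u) u'
  | altB {t t' u u' : Tm A} : SStep t t' → SStep u u' → SStep (.alt t u) (.alt t' u')
  | seq {t t' : Tm A} (u : Tm A) : SStep t t' → SStep (.seq t u) (.seq t' u)
  | par {t t' u u' : Tm A} : SStep t t' → SStep u u' → SStep (.par t u) (.par t' u')
  | lm {t t' u u' : Tm A} : SStep t t' → SStep u u' → SStep (.lm t u) (.lm t' u')
  | cm {t t' u u' : Tm A} : SStep t t' → SStep u u' → SStep (.cm t u) (.cm t' u')
  | encap (H : Set A) {t t' : Tm A} : SStep t t' → SStep (.encap H t) (.encap H t')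
  | abstr (I : Set A) {t t' : Tm A} : SStep t t' → SStep (.abstr I t) (.abstr I t')
  | recc {E : ℕ → Tm A} {X : ℕ} {t' : Tm A} : Tm.GuardedSpec E →
      SStep (Tm.sub E (E X)) t' → SStep (.recc E X) t'

/-- Action transitions of the two-phase semantics (Table 3); the label `none`
is the silent step τ and the target `none` is successful termination √. -/
inductive AStep {A : Type} (γ : ATD A → ATD A → ATD A) :
    Tm A → Option A → Option (Tm A) → Prop where
  | act (a : A) : AStep γ (.und (.act a)) (some a) none
  | tau : AStep γ (.und .tau) none none
  | altL {t u ℓ o} : AStep γ t ℓ o → AStep γ (.alt t u) ℓ o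
  | altR {t u ℓ o} : AStep γ u ℓ o → AStep γ (.alt t u) ℓ o
  | seqStep {t t' u ℓ} : AStep γ t ℓ (some t') → AStep γ (.seq t u) ℓ (some (.seq t' u))
  | seqTerm {t u ℓ} : AStep γ t ℓ none → AStep γ (.seq t u) ℓ (some u)
  | parL {t t' u ℓ} : AStep γ t ℓ (some t') → AStep γ (.par t u) ℓ (some (.par t' u))
  | parR {t u u' ℓ} : AStep γ u ℓ (some u') → AStep γ (.par t u) ℓ (some (.par t u'))
  | parLT {t u ℓ} : AStep γ t ℓ none → AStep γ (.par t u) ℓ (some u)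
  | parRT {t u ℓ} : AStep γ u ℓ none → AStep γ (.par t u) ℓ (some t)
  | parC {t u ℓ₁ ℓ₂ ℓ o₁ o₂} : AStep γ t ℓ₁ o₁ → AStep γ u ℓ₂ o₂ →
      γ (toATD ℓ₁) (toATD ℓ₂) = toATD ℓ → AStep γ (.par t u) ℓ (parOpt o₁ o₂)
  | lmStep {t t' u ℓ} : AStep γ t ℓ (some t') → AStep γ (.lm t u) ℓ (some (.par t' u))
  | lmTerm {t u ℓ} : AStep γ t ℓ none → AStep γ (.lm t u) ℓ (some u)
  | cmC {t u ℓ₁ ℓ₂ ℓ o₁ o₂} : AStep γ t ℓ₁ o₁ → AStep γ u ℓ₂ o₂ →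
      γ (toATD ℓ₁) (toATD ℓ₂) = toATD ℓ → AStep γ (.cm t u) ℓ (parOpt o₁ o₂)
  | encap (H : Set A) {t ℓ o} : AStep γ t ℓ o → (∀ b, ℓ = some b → b ∉ H) →
      AStep γ (.encap H t) ℓ (Option.map (Tm.encap H) o)
  | abstrKeep (I : Set A) {t ℓ o} : AStep γ t ℓ o → (∀ b, ℓ = some b → b ∉ I) →
      AStep γ (.abstr I t) ℓ (Option.map (Tm.abstr I) o)
  | abstrHide (I : Set A) {t b o} : AStep γ t (some b) o → b ∈ I →
      AStep γ (.abstr I t) none (Option.map (Tm.abstr I) o)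
  | timeout {t ℓ o} : AStep γ t ℓ o → AStep γ (.timeout t) ℓ o
  | recc {E X ℓ o} : Tm.GuardedSpec E → AStep γ (Tm.sub E (E X)) ℓ o →
      AStep γ (.recc E X) ℓ o

/-- Labels of the two-phase semantics: A ∪ {τ} ∪ {σ}. -/
inductive L2 (A : Type) where
  | act : A → L2 A
  | tau : L2 A
  | sig : L2 A

/-- Combined transition relation of the two-phase semantics. -/
def Step {A : Type} (γ : ATD A → ATD A → ATD A) (t : Tm A) :
    L2 A → Option (Tm A) → Prop
  | .act a, o => AStep γ t (some a) o
  | .tau, o => AStep γ t none o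
  | .sig, o => ∃ t', o = some t' ∧ SStep t t'

/-- A silent path t₂ = t*₀ →τ t*₁ →τ ⋯ →τ t*ₙ with R(t₁, t*ᵢ₊₁) at every step. -/
inductive TauSeq {A : Type} (γ : ATD A → ATD A → ATD A)
    (R : Option (Tm A) → Option (Tm A) → Prop) (t1 t2 : Tm A) : Tm A → Prop where
  | refl : TauSeq γ R t1 t2 t2
  | step {u v : Tm A} : TauSeq γ R t1 t2 u → AStep γ u none (some v) →
      R (some t1) (some v) → TauSeq γ R t1 t2 v

/-- Branching bisimulation on the two-phase semantics. -/
def IsBB {A : Type} (γ : ATD A → ATD A → ATD A)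
    (R : Option (Tm A) → Option (Tm A) → Prop) : Prop :=
  ∀ t1 t2, R (some t1) (some t2) →
    (∀ ℓ o1, Step γ t1 ℓ o1 →
      (ℓ = L2.tau ∧ R o1 (some t2)) ∨
      ∃ u o2, TauSeq γ R t1 t2 u ∧ Step γ u ℓ o2 ∧ R o1 o2) ∧
    (∀ ℓ o2, Step γ t2 ℓ o2 →
      (ℓ = L2.tau ∧ R (some t1) o2) ∨
      ∃ u o1, TauSeq γ (fun p q => R q p) t2 t1 u ∧ Step γ u ℓ o1 ∧ R o1 o2)

/-- Branching bisimilarity ↔_b on the two-phase semantics. -/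
def BBisim {A : Type} (γ : ATD A → ATD A → ATD A) (t1 t2 : Tm A) : Prop :=
  ∃ R, IsBB γ R ∧ R (some t1) (some t2)

/-- The root condition of a pair in a relation (two-phase semantics). -/
def RootCond {A : Type} (γ : ATD A → ATD A → ATD A)
    (R : Option (Tm A) → Option (Tm A) → Prop) (t1 t2 : Tm A) : Prop :=
  (∀ ℓ o1, Step γ t1 ℓ o1 → ∃ o2, Step γ t2 ℓ o2 ∧ R o1 o2) ∧
  (∀ ℓ o2, Step γ t2 ℓ o2 → ∃ o1, Step γ t1 ℓ o1 ∧ R o1 o2)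

/-- Reachability by idling only. -/
def Midling {A : Type} : Tm A → Tm A → Prop := Relation.ReflTransGen SStep

/-- Rooted branching bisimilarity ↔_rb on the two-phase semantics. -/
def RootedBB {A : Type} (γ : ATD A → ATD A → ATD A) (t1 t2 : Tm A) : Prop :=
  ∃ R, IsBB γ R ∧ R (some t1) (some t2) ∧
    ∀ t1' t2', Midling t1 t1' → Midling t2 t2' → R (some t1') (some t2') →
      RootCond γ R t1' t2'

/-! ### Time-stamped structural operational semantics -/

/-- Idling relation of the time-stamped semantics: t ⇑ n. -/
inductive Idles {A : Type} : Tm A → ℕ → Prop where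
  | zero (t : Tm A) : Idles t 0
  | altL {t u n} : Idles t n → Idles (.alt t u) n
  | altR {t u n} : Idles u n → Idles (.alt t u) n
  | seq {t n} (u : Tm A) : Idles t n → Idles (.seq t u) n
  | delay {t n} : Idles t n → Idles (.delay t) (n+1)
  | par {t u n} : Idles t n → Idles u n → Idles (.par t u) n
  | lm {t u n} : Idles t n → Idles u n → Idles (.lm t u) n
  | cm {t u n} : Idles t n → Idles u n → Idles (.cm t u) n
  | encap (H : Set A) {t n} : Idles t n → Idles (.encap H t) n
  | abstr (I : Set A) {t n} : Idles t n → Idles (.abstr I t) n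
  | recc {E X n} : Tm.GuardedSpec E → Idles (Tm.sub E (E X)) n → Idles (.recc E X) n
  | shift {t n} : Idles t (n+1) → Idles (.shift t) n

/-- Time-stamped transitions t →^{a[n]} t' (Table 6); the label `none` is τ and
the target `none` is successful termination √. -/
inductive TStep {A : Type} (γ : ATD A → ATD A → ATD A) :
    Tm A → Option A → ℕ → Option (Tm A) → Prop where
  | act (a : A) : TStep γ (.und (.act a)) (some a) 0 none
  | tau : TStep γ (.und .tau) none 0 none
  | altL {t u ℓ n o} : TStep γ t ℓ n o → TStep γ (.alt t u) ℓ n o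
  | altR {t u ℓ n o} : TStep γ u ℓ n o → TStep γ (.alt t u) ℓ n o
  | seqStep {t t' u ℓ n} : TStep γ t ℓ n (some t') →
      TStep γ (.seq t u) ℓ n (some (.seq t' u))
  | seqTerm {t u ℓ n} : TStep γ t ℓ n none → TStep γ (.seq t u) ℓ n (some u)
  | delay {t ℓ n o} : TStep γ t ℓ n o → TStep γ (.delay t) ℓ (n+1) o
  | parL {t t' u ℓ n} : TStep γ t ℓ n (some t') → Idles u n →
      TStep γ (.par t u) ℓ n (some (.par t' (Tm.shiftN n u)))
  | parR {t u u' ℓ n} : Idles t n → TStep γ u ℓ n (some u') →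
      TStep γ (.par t u) ℓ n (some (.par (Tm.shiftN n t) u'))
  | parLT {t u ℓ n} : TStep γ t ℓ n none → Idles u n →
      TStep γ (.par t u) ℓ n (some (Tm.shiftN n u))
  | parRT {t u ℓ n} : Idles t n → TStep γ u ℓ n none →
      TStep γ (.par t u) ℓ n (some (Tm.shiftN n t))
  | parC {t u ℓ₁ ℓ₂ ℓ n o₁ o₂} : TStep γ t ℓ₁ n o₁ → TStep γ u ℓ₂ n o₂ →
      γ (toATD ℓ₁) (toATD ℓ₂) = toATD ℓ → TStep γ (.par t u) ℓ n (parOpt o₁ o₂)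
  | lmStep {t t' u ℓ n} : TStep γ t ℓ n (some t') → Idles u n →
      TStep γ (.lm t u) ℓ n (some (.par t' (Tm.shiftN n u)))
  | lmTerm {t u ℓ n} : TStep γ t ℓ n none → Idles u n →
      TStep γ (.lm t u) ℓ n (some (Tm.shiftN n u))
  | cmC {t u ℓ₁ ℓ₂ ℓ n o₁ o₂} : TStep γ t ℓ₁ n o₁ → TStep γ u ℓ₂ n o₂ →
      γ (toATD ℓ₁) (toATD ℓ₂) = toATD ℓ → TStep γ (.cm t u) ℓ n (parOpt o₁ o₂)
  | encap (H : Set A) {t ℓ n o} : TStep γ t ℓ n o → (∀ b, ℓ = some b → b ∉ H) →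
      TStep γ (.encap H t) ℓ n (Option.map (Tm.encap H) o)
  | abstrKeep (I : Set A) {t ℓ n o} : TStep γ t ℓ n o → (∀ b, ℓ = some b → b ∉ I) →
      TStep γ (.abstr I t) ℓ n (Option.map (Tm.abstr I) o)
  | abstrHide (I : Set A) {t b n o} : TStep γ t (some b) n o → b ∈ I →
      TStep γ (.abstr I t) none n (Option.map (Tm.abstr I) o)
  | timeout {t ℓ o} : TStep γ t ℓ 0 o → TStep γ (.timeout t) ℓ 0 o
  | recc {E X ℓ n o} : Tm.GuardedSpec E → TStep γ (Tm.sub E (E X)) ℓ n o →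
      TStep γ (.recc E X) ℓ n o
  | shift {t ℓ n o} : TStep γ t ℓ (n+1) o → TStep γ (.shift t) ℓ n o

/-- A time-stamped silent path from t₂ with accumulated duration, relating the
appropriately shifted t₁ with every intermediate state. -/
inductive TsSeq {A : Type} (γ : ATD A → ATD A → ATD A)
    (R : Option (Tm A) → Option (Tm A) → Prop) (t1 t2 : Tm A) : ℕ → Tm A → Prop where
  | refl : TsSeq γ R t1 t2 0 t2
  | step {k u nk v} : TsSeq γ R t1 t2 k u → TStep γ u none nk (some v) →
      R (some (Tm.shiftN (k+nk) t1)) (some v) → TsSeq γ R t1 t2 (k+nk) v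

/-- ts-branching bisimulation. -/
def IsTsBB {A : Type} (γ : ATD A → ATD A → ATD A)
    (R : Option (Tm A) → Option (Tm A) → Prop) : Prop :=
  ∀ t1 t2, R (some t1) (some t2) →
    (∀ ℓ n o1, TStep γ t1 ℓ n o1 →
      (ℓ = none ∧ R o1 (some (Tm.shiftN n t2))) ∨
      ∃ k u nm o2, TsSeq γ R t1 t2 k u ∧ TStep γ u ℓ nm o2 ∧ k + nm = n ∧ R o1 o2) ∧
    (∀ ℓ n o2, TStep γ t2 ℓ n o2 →
      (ℓ = none ∧ R (some (Tm.shiftN n t1)) o2) ∨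
      ∃ k u nm o1, TsSeq γ (fun p q => R q p) t2 t1 k u ∧ TStep γ u ℓ nm o1 ∧
        k + nm = n ∧ R o1 o2) ∧
    (∀ n, Idles t1 n ↔ Idles t2 n)

/-- The ts-root condition of a pair in a relation. -/
def TsRootCond {A : Type} (γ : ATD A → ATD A → ATD A)
    (R : Option (Tm A) → Option (Tm A) → Prop) (t1 t2 : Tm A) : Prop :=
  (∀ ℓ n o1, TStep γ t1 ℓ n o1 → ∃ o2, TStep γ t2 ℓ n o2 ∧ R o1 o2) ∧
  (∀ ℓ n o2, TStep γ t2 ℓ n o2 → ∃ o1, TStep γ t1 ℓ n o1 ∧ R o1 o2)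

/-- Rooted ts-branching bisimilarity ↔'_rb. -/
def RootedTsBB {A : Type} (γ : ATD A → ATD A → ATD A) (t1 t2 : Tm A) : Prop :=
  ∃ R, IsTsBB γ R ∧ R (some t1) (some t2) ∧ TsRootCond γ R t1 t2

/-- Activeness: the capability of performing an action in the current time
slice, possibly after some silent steps in the current time slice. -/
inductive Active {A : Type} (γ : ATD A → ATD A → ATD A) : Tm A → Prop where
  | obs {t : Tm A} {a : A} {t' : Tm A} : TStep γ t (some a) 0 (some t') → Active γ t
  | term {t : Tm A} {ℓ : Option A} : TStep γ t ℓ 0 none → Active γ t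
  | tauStep {t t' : Tm A} : TStep γ t none 0 (some t') → Active γ t' → Active γ t

/-- Activeness extended to 𝒫 ∪ {√} (√ is not active). -/
def ActiveO {A : Type} (γ : ATD A → ATD A → ATD A) : Option (Tm A) → Prop
  | some t => Active γ t
  | none => False

/-- A time-stamped silent path for dormancy-aware branching bisimulations:
relatedness of an intermediate state is only required when it is active. -/
inductive DaSeq {A : Type} (γ : ATD A → ATD A → ATD A)
    (R : Option (Tm A) → Option (Tm A) → Prop) (t1 t2 : Tm A) : ℕ → Tm A → Prop where
  | refl : DaSeq γ R t1 t2 0 t2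
  | step {k u nk v} : DaSeq γ R t1 t2 k u → TStep γ u none nk (some v) →
      (Active γ v → R (some (Tm.shiftN (k+nk) t1)) (some v)) → DaSeq γ R t1 t2 (k+nk) v

/-- Dormancy-aware branching bisimulation. -/
def IsDaBB {A : Type} (γ : ATD A → ATD A → ATD A)
    (R : Option (Tm A) → Option (Tm A) → Prop) : Prop :=
  ∀ t1 t2, R (some t1) (some t2) →
    (∀ ℓ n o1, TStep γ t1 ℓ n o1 →
      (ℓ = none ∧ (ActiveO γ o1 → R o1 (some (Tm.shiftN n t2)))) ∨
      ∃ k u nm o2, DaSeq γ R t1 t2 k u ∧ TStep γ u ℓ nm o2 ∧ k + nm = n ∧ R o1 o2) ∧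
    (∀ ℓ n o2, TStep γ t2 ℓ n o2 →
      (ℓ = none ∧ (ActiveO γ o2 → R (some (Tm.shiftN n t1)) o2)) ∨
      ∃ k u nm o1, DaSeq γ (fun p q => R q p) t2 t1 k u ∧ TStep γ u ℓ nm o1 ∧
        k + nm = n ∧ R o1 o2) ∧
    (∀ n, Idles t1 n ↔ Idles t2 n)

/-- Rooted dormancy-aware branching bisimilarity ⇄_rb. -/
def RootedDaBB {A : Type} (γ : ATD A → ATD A → ATD A) (t1 t2 : Tm A) : Prop :=
  ∃ R, IsDaBB γ R ∧ R (some t1) (some t2) ∧ TsRootCond γ R t1 t2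

/-- n-fold σ-step sequences in the two-phase semantics. -/
def SSeq {A : Type} : ℕ → Tm A → Tm A → Prop
  | 0, t, t' => t' = t
  | n+1, t, t' => ∃ u, SStep t u ∧ SSeq n u t'

/-- The axioms of standard concurrency together with the handshaking axiom. -/
inductive SCAx {A : Type} : Tm A → Tm A → Prop where
  | parComm (x y : Tm A) : SCAx (.par x y) (.par y x)
  | parAssoc (x y z : Tm A) : SCAx (.par (.par x y) z) (.par x (.par y z))
  | lmAssoc (x y z : Tm A) : SCAx (.lm (.lm x y) z) (.lm x (.par y z))
  | cmComm (x y : Tm A) : SCAx (.cm x y) (.cm y x)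
  | cmAssoc (x y z : Tm A) : SCAx (.cm (.cm x y) z) (.cm x (.cm y z))
  | cmLm (x y z : Tm A) : SCAx (.cm x (.lm y z)) (.lm (.cm x y) z)
  | handshaking (x y z : Tm A) : SCAx (.timeout (.cm (.cm x y) z)) (.und .delta)

/-- The defining axioms of the time-free projection operator π_tf. -/
inductive TFPAx {A : Type} : Tm A → Tm A → Prop where
  | DRTFP1 (a : ATD A) : TFPAx (.tfp (.und a)) (Tm.dact a)
  | DRTFP2 (x y : Tm A) : TFPAx (.tfp (.alt x y)) (.alt (.tfp x) (.tfp y))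
  | DRTFP3 (x y : Tm A) : TFPAx (.tfp (.seq x y)) (.seq (.tfp x) (.tfp y))
  | DRTFP4 (x : Tm A) : TFPAx (.tfp (.delay x)) (.tfp x)

/-! ### The untimed theory ACP^τ+REC -/

/-- Terms of untimed ACP^τ with guarded recursion. -/
inductive UTm (A : Type) : Type where
  | c : ATD A → UTm A
  | alt : UTm A → UTm A → UTm A
  | seq : UTm A → UTm A → UTm A
  | par : UTm A → UTm A → UTm A
  | lm : UTm A → UTm A → UTm A
  | cm : UTm A → UTm A → UTm A
  | encap : Set A → UTm A → UTm A
  | abstr : Set A → UTm A → UTm A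
  | var : ℕ → UTm A
  | recc : (ℕ → UTm A) → ℕ → UTm A

namespace UTm
variable {A : Type}

def asg (θ : ℕ → UTm A) : UTm A → UTm A
  | c a => c a
  | alt t u => alt (asg θ t) (asg θ u)
  | seq t u => seq (asg θ t) (asg θ u)
  | par t u => par (asg θ t) (asg θ u)
  | lm t u => lm (asg θ t) (asg θ u)
  | cm t u => cm (asg θ t) (asg θ u)
  | encap H t => encap H (asg θ t)
  | abstr I t => abstr I (asg θ t)
  | var X => θ X
  | recc E X => recc E X

def sub (E : ℕ → UTm A) (t : UTm A) : UTm A := asg (fun Y => recc E Y) t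

def Guarded : UTm A → Prop
  | c _ => True
  | alt t u => Guarded t ∧ Guarded u
  | seq t u => Guarded t ∧ (Guarded u ∨ ∃ a : A, t = c (ATD.act a))
  | par t u => Guarded t ∧ Guarded u
  | lm t u => Guarded t ∧ Guarded u
  | cm t u => Guarded t ∧ Guarded u
  | encap _ t => Guarded t
  | abstr _ _ => False
  | var _ => False
  | recc _ _ => True

def GuardedSpec (E : ℕ → UTm A) : Prop := ∀ Y, Guarded (E Y)

/-- Closed untimed term. -/
def Closed : UTm A → Prop
  | c _ => True
  | alt t u => Closed t ∧ Closed u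
  | seq t u => Closed t ∧ Closed u
  | par t u => Closed t ∧ Closed u
  | lm t u => Closed t ∧ Closed u
  | cm t u => Closed t ∧ Closed u
  | encap _ t => Closed t
  | abstr _ t => Closed t
  | var _ => False
  | recc _ _ => True

end UTm

/-- Derivability from the axioms of untimed ACP^τ+REC (with the branching
silent-step axioms B1 and B2 and with RDP and RSP). -/
inductive UDeriv {A : Type} (γ : ATD A → ATD A → ATD A) : UTm A → UTm A → Prop where
  | refl (t) : UDeriv γ t t
  | symm {t u} : UDeriv γ t u → UDeriv γ u t
  | trans {t u v} : UDeriv γ t u → UDeriv γ u v → UDeriv γ t v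
  | altCongr {t t' u u'} : UDeriv γ t t' → UDeriv γ u u' → UDeriv γ (.alt t u) (.alt t' u')
  | seqCongr {t t' u u'} : UDeriv γ t t' → UDeriv γ u u' → UDeriv γ (.seq t u) (.seq t' u')
  | parCongr {t t' u u'} : UDeriv γ t t' → UDeriv γ u u' → UDeriv γ (.par t u) (.par t' u')
  | lmCongr {t t' u u'} : UDeriv γ t t' → UDeriv γ u u' → UDeriv γ (.lm t u) (.lm t' u')
  | cmCongr {t t' u u'} : UDeriv γ t t' → UDeriv γ u u' → UDeriv γ (.cm t u) (.cm t' u')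
  | encapCongr (H) {t t'} : UDeriv γ t t' → UDeriv γ (.encap H t) (.encap H t')
  | abstrCongr (I) {t t'} : UDeriv γ t t' → UDeriv γ (.abstr I t) (.abstr I t')
  | A1 (x y) : UDeriv γ (.alt x y) (.alt y x)
  | A2 (x y z) : UDeriv γ (.alt (.alt x y) z) (.alt x (.alt y z))
  | A3 (x) : UDeriv γ (.alt x x) x
  | A4 (x y z) : UDeriv γ (.seq (.alt x y) z) (.alt (.seq x z) (.seq y z))
  | A5 (x y z) : UDeriv γ (.seq (.seq x y) z) (.seq x (.seq y z))
  | A6 (x) : UDeriv γ (.alt x (.c .delta)) x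
  | A7 (x) : UDeriv γ (.seq (.c .delta) x) (.c .delta)
  | D1 (a : ATD A) (H : Set A) (h : ∀ b, a = ATD.act b → b ∉ H) :
      UDeriv γ (.encap H (.c a)) (.c a)
  | D2 (b : A) (H : Set A) (h : b ∈ H) : UDeriv γ (.encap H (.c (.act b))) (.c .delta)
  | D3 (H x y) : UDeriv γ (.encap H (.alt x y)) (.alt (.encap H x) (.encap H y))
  | D4 (H x y) : UDeriv γ (.encap H (.seq x y)) (.seq (.encap H x) (.encap H y))
  | TI1 (a : ATD A) (I : Set A) (h : ∀ b, a = ATD.act b → b ∉ I) :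
      UDeriv γ (.abstr I (.c a)) (.c a)
  | TI2 (b : A) (I : Set A) (h : b ∈ I) : UDeriv γ (.abstr I (.c (.act b))) (.c .tau)
  | TI3 (I x y) : UDeriv γ (.abstr I (.alt x y)) (.alt (.abstr I x) (.abstr I y))
  | TI4 (I x y) : UDeriv γ (.abstr I (.seq x y)) (.seq (.abstr I x) (.abstr I y))
  | CM1 (x y) : UDeriv γ (.par x y) (.alt (.alt (.lm x y) (.lm y x)) (.cm x y))
  | CM2 (a : ATD A) (x) : UDeriv γ (.lm (.c a) x) (.seq (.c a) x)
  | CM3 (a : ATD A) (x y) : UDeriv γ (.lm (.seq (.c a) x) y) (.seq (.c a) (.par x y))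
  | CM4 (x y z) : UDeriv γ (.lm (.alt x y) z) (.alt (.lm x z) (.lm y z))
  | CM5 (a b : ATD A) (x) : UDeriv γ (.cm (.seq (.c a) x) (.c b)) (.seq (.cm (.c a) (.c b)) x)
  | CM6 (a b : ATD A) (x) : UDeriv γ (.cm (.c a) (.seq (.c b) x)) (.seq (.cm (.c a) (.c b)) x)
  | CM7 (a b : ATD A) (x y) :
      UDeriv γ (.cm (.seq (.c a) x) (.seq (.c b) y)) (.seq (.cm (.c a) (.c b)) (.par x y))
  | CM8 (x y z) : UDeriv γ (.cm (.alt x y) z) (.alt (.cm x z) (.cm y z))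
  | CM9 (x y z) : UDeriv γ (.cm x (.alt y z)) (.alt (.cm x y) (.cm x z))
  | CF (a b : ATD A) : UDeriv γ (.cm (.c a) (.c b)) (.c (γ a b))
  | B1 (x) : UDeriv γ (.seq x (.c .tau)) x
  | B2 (x y z) : UDeriv γ (.seq x (.alt (.seq (.c .tau) (.alt y z)) z)) (.seq x (.alt y z))
  | RDP (E : ℕ → UTm A) (X : ℕ) (hg : UTm.GuardedSpec E) :
      UDeriv γ (.recc E X) (UTm.sub E (E X))
  | RSP (E : ℕ → UTm A) (θ : ℕ → UTm A) (X : ℕ) (hg : UTm.GuardedSpec E)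
      (h : ∀ Y, UDeriv γ (θ Y) (UTm.asg θ (E Y))) : UDeriv γ (θ X) (.recc E X)

/-- The embedding ε of untimed ACP^τ+REC terms into ACP_drt^τ+REC, replacing
each action constant a by the delayable action ⟨X | X = \underline{a} + σ(X)⟩. -/
def eps {A : Type} : UTm A → Tm A
  | .c a => Tm.dact a
  | .alt t u => .alt (eps t) (eps u)
  | .seq t u => .seq (eps t) (eps u)
  | .par t u => .par (eps t) (eps u)
  | .lm t u => .lm (eps t) (eps u)
  | .cm t u => .cm (eps t) (eps u)
  | .encap H t => .encap H (eps t)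
  | .abstr I t => .abstr I (eps t)
  | .var X => .var X
  | .recc E X => .recc (fun Y => eps (E Y)) X

/-! ### Auxiliary development for the elimination theorem -/

namespace ElimAux

variable {A : Type} {γ : ATD A → ATD A → ATD A}

/-- A simple size measure on terms. -/
def sz {A : Type} : Tm A → ℕ
  | .alt t u => sz t + sz u + 1
  | .seq t u => sz t + sz u + 1
  | .delay t => sz t + 1
  | _ => 1

@[simp] theorem sz_alt (t u : Tm A) : sz (.alt t u) = sz t + sz u + 1 := rfl
@[simp] theorem sz_seq (t u : Tm A) : sz (.seq t u) = sz t + sz u + 1 := rfl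
@[simp] theorem sz_delay (t : Tm A) : sz (.delay t) = sz t + 1 := rfl
@[simp] theorem sz_und (a : ATD A) : sz (Tm.und a : Tm A) = 1 := rfl

theorem dN_congr {t u : Tm A} (h : Deriv γ NoAx false t u) :
    ∀ n, Deriv γ NoAx false (Tm.delayN n t) (Tm.delayN n u)
  | 0 => h
  | n+1 => Deriv.delayCongr (dN_congr h n)

theorem seq_dN (x y : Tm A) :
    ∀ n, Deriv γ NoAx false (.seq (Tm.delayN n x) y) (Tm.delayN n (.seq x y))
  | 0 => Deriv.refl _
  | n+1 => Deriv.trans (Deriv.DRT2 _ _) (Deriv.delayCongr (seq_dN x y n))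

theorem encap_dN (H : Set A) (x : Tm A) :
    ∀ n, Deriv γ NoAx false (.encap H (Tm.delayN n x)) (Tm.delayN n (.encap H x))
  | 0 => Deriv.refl _
  | n+1 => Deriv.trans (Deriv.DRD _ _) (Deriv.delayCongr (encap_dN H x n))

theorem abstr_dN (I : Set A) (x : Tm A) :
    ∀ n, Deriv γ NoAx false (.abstr I (Tm.delayN n x)) (Tm.delayN n (.abstr I x))
  | 0 => Deriv.refl _
  | n+1 => Deriv.trans (Deriv.DRTI _ _) (Deriv.delayCongr (abstr_dN I x n))

/-- δ-padding: x = ν(δ) + x. -/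
theorem pad (x : Tm A) :
    Deriv γ NoAx false x (.alt (.timeout (.und .delta)) x) :=
  Deriv.trans (Deriv.symm (Deriv.A6DR x))
    (Deriv.trans (Deriv.A1 _ _)
      (Deriv.altCongr (Deriv.symm (Deriv.DRTO1 ATD.delta)) (Deriv.refl _)))

theorem now_t₁ (a : ATD A) :
    Deriv γ NoAx false (.und a) (.timeout (.und a)) := Deriv.symm (Deriv.DRTO1 a)

theorem now_t₂ (a : ATD A) (x : Tm A) :
    Deriv γ NoAx false (.seq (.und a) x) (.timeout (.seq (.und a) x)) :=
  Deriv.symm (Deriv.trans (Deriv.DRTO3 _ _)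
    (Deriv.seqCongr (Deriv.DRTO1 a) (Deriv.refl _)))

theorem perm4 (a b c d : Tm A) :
    Deriv γ NoAx false (.alt (.alt a b) (.alt c d)) (.alt (.alt a c) (.alt b d)) := by
  have inner : Deriv γ NoAx false (.alt b (.alt c d)) (.alt c (.alt b d)) :=
    Deriv.trans (Deriv.symm (Deriv.A2 b c d))
      (Deriv.trans (Deriv.altCongr (Deriv.A1 b c) (Deriv.refl _)) (Deriv.A2 c b d))
  exact Deriv.trans (Deriv.A2 a b _)
    (Deriv.trans (Deriv.altCongr (Deriv.refl a) inner) (Deriv.symm (Deriv.A2 a c _)))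

/-- Delaying a ts-basic term. -/
theorem tsb_delay {t : Tm A} (h : TsBasic t) :
    ∃ v, TsBasic v ∧ Deriv γ NoAx false (.delay t) v := by
  induction h with
  | und a n => exact ⟨_, TsBasic.und a (n+1), Deriv.refl _⟩
  | pre a n hne ht _ih =>
      exact ⟨_, TsBasic.pre a (n+1) hne ht, Deriv.symm (Deriv.DRT2 _ _)⟩
  | alt h1 h2 ih1 ih2 =>
      obtain ⟨v1, hv1, d1⟩ := ih1
      obtain ⟨v2, hv2, d2⟩ := ih2
      exact ⟨_, TsBasic.alt hv1 hv2,
        Deriv.trans (Deriv.symm (Deriv.DRT1 _ _)) (Deriv.altCongr d1 d2)⟩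

/-- Sequencing ts-basic terms. -/
theorem tsb_seq {t u : Tm A} (ht : TsBasic t) (hu : TsBasic u) :
    ∃ v, TsBasic v ∧ Deriv γ NoAx false (.seq t u) v := by
  induction ht with
  | und a n =>
      rcases eq_or_ne a ATD.delta with rfl | hne
      · exact ⟨_, TsBasic.und ATD.delta n,
          Deriv.trans (seq_dN _ _ n) (dN_congr (Deriv.A7DR u) n)⟩
      · exact ⟨_, TsBasic.pre a n hne hu, Deriv.refl _⟩
  | pre a n hne hx ih =>
      obtain ⟨v, hv, hd⟩ := ih
      exact ⟨_, TsBasic.pre a n hne hv,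
        Deriv.trans (Deriv.A5 _ _ _) (Deriv.seqCongr (Deriv.refl _) hd)⟩
  | alt h1 h2 ih1 ih2 =>
      obtain ⟨v1, hv1, d1⟩ := ih1
      obtain ⟨v2, hv2, d2⟩ := ih2
      exact ⟨_, TsBasic.alt hv1 hv2, Deriv.trans (Deriv.A4 _ _ _) (Deriv.altCongr d1 d2)⟩

/-- Time-out of a ts-basic term. -/
theorem tsb_timeout {t : Tm A} (h : TsBasic t) :
    ∃ v, TsBasic v ∧ Deriv γ NoAx false (.timeout t) v := by
  induction h with
  | und a n =>
      cases n with
      | zero => exact ⟨_, TsBasic.und a 0, Deriv.DRTO1 a⟩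
      | succ n => exact ⟨_, TsBasic.und ATD.delta 0, Deriv.DRTO4 _⟩
  | pre a n hne hx _ih =>
      cases n with
      | zero => exact ⟨_, TsBasic.pre a 0 hne hx,
          Deriv.trans (Deriv.DRTO3 _ _) (Deriv.seqCongr (Deriv.DRTO1 a) (Deriv.refl _))⟩
      | succ n => exact ⟨_, TsBasic.und ATD.delta 0,
          Deriv.trans (Deriv.DRTO3 _ _)
            (Deriv.trans (Deriv.seqCongr (Deriv.DRTO4 _) (Deriv.refl _)) (Deriv.A7DR _))⟩
  | alt h1 h2 ih1 ih2 =>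
      obtain ⟨v1, hv1, d1⟩ := ih1
      obtain ⟨v2, hv2, d2⟩ := ih2
      exact ⟨_, TsBasic.alt hv1 hv2, Deriv.trans (Deriv.DRTO2 _ _) (Deriv.altCongr d1 d2)⟩

theorem encap_und (H : Set A) (a : ATD A) :
    ∃ a' : ATD A, Deriv γ NoAx false (.encap H (.und a)) (.und a') := by
  classical
  match a with
  | ATD.tau => exact ⟨ATD.tau, Deriv.D1DR _ H (by intro b h; cases h)⟩
  | ATD.delta => exact ⟨ATD.delta, Deriv.D1DR _ H (by intro b h; cases h)⟩
  | ATD.act b =>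
      by_cases hb : b ∈ H
      · exact ⟨ATD.delta, Deriv.D2DR b H hb⟩
      · refine ⟨ATD.act b, Deriv.D1DR _ H ?_⟩
        intro b' hb'
        cases hb'
        exact hb

theorem abstr_und (I : Set A) (a : ATD A) :
    ∃ a' : ATD A, Deriv γ NoAx false (.abstr I (.und a)) (.und a') := by
  classical
  match a with
  | ATD.tau => exact ⟨ATD.tau, Deriv.TI1DR _ I (by intro b h; cases h)⟩
  | ATD.delta => exact ⟨ATD.delta, Deriv.TI1DR _ I (by intro b h; cases h)⟩
  | ATD.act b =>
      by_cases hb : b ∈ I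
      · exact ⟨ATD.tau, Deriv.TI2DR b I hb⟩
      · refine ⟨ATD.act b, Deriv.TI1DR _ I ?_⟩
        intro b' hb'
        cases hb'
        exact hb

/-- Encapsulation of a ts-basic term. -/
theorem tsb_encap (H : Set A) {t : Tm A} (h : TsBasic t) :
    ∃ v, TsBasic v ∧ Deriv γ NoAx false (.encap H t) v := by
  induction h with
  | und a n =>
      obtain ⟨a', hd⟩ := encap_und (γ := γ) H a
      exact ⟨_, TsBasic.und a' n, Deriv.trans (encap_dN H _ n) (dN_congr hd n)⟩
  | pre a n hne hx ih =>
      obtain ⟨v, hv, hdv⟩ := ih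
      obtain ⟨a', hd⟩ := encap_und (γ := γ) H a
      have h1 : Deriv γ NoAx false (.encap H (.seq (Tm.delayN n (.und a)) _))
          (.seq (Tm.delayN n (.und a')) v) :=
        Deriv.trans (Deriv.D4 _ _ _)
          (Deriv.seqCongr (Deriv.trans (encap_dN H _ n) (dN_congr hd n)) hdv)
      rcases eq_or_ne a' ATD.delta with rfl | hne'
      · exact ⟨_, TsBasic.und ATD.delta n,
          Deriv.trans h1 (Deriv.trans (seq_dN _ _ n) (dN_congr (Deriv.A7DR v) n))⟩
      · exact ⟨_, TsBasic.pre a' n hne' hv, h1⟩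
  | alt h1 h2 ih1 ih2 =>
      obtain ⟨v1, hv1, d1⟩ := ih1
      obtain ⟨v2, hv2, d2⟩ := ih2
      exact ⟨_, TsBasic.alt hv1 hv2, Deriv.trans (Deriv.D3 _ _ _) (Deriv.altCongr d1 d2)⟩

/-- Abstraction of a ts-basic term. -/
theorem tsb_abstr (I : Set A) {t : Tm A} (h : TsBasic t) :
    ∃ v, TsBasic v ∧ Deriv γ NoAx false (.abstr I t) v := by
  induction h with
  | und a n =>
      obtain ⟨a', hd⟩ := abstr_und (γ := γ) I a
      exact ⟨_, TsBasic.und a' n, Deriv.trans (abstr_dN I _ n) (dN_congr hd n)⟩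
  | pre a n hne hx ih =>
      obtain ⟨v, hv, hdv⟩ := ih
      obtain ⟨a', hd⟩ := abstr_und (γ := γ) I a
      have h1 : Deriv γ NoAx false (.abstr I (.seq (Tm.delayN n (.und a)) _))
          (.seq (Tm.delayN n (.und a')) v) :=
        Deriv.trans (Deriv.TI4 _ _ _)
          (Deriv.seqCongr (Deriv.trans (abstr_dN I _ n) (dN_congr hd n)) hdv)
      rcases eq_or_ne a' ATD.delta with rfl | hne'
      · exact ⟨_, TsBasic.und ATD.delta n,
          Deriv.trans h1 (Deriv.trans (seq_dN _ _ n) (dN_congr (Deriv.A7DR v) n))⟩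
      · exact ⟨_, TsBasic.pre a' n hne' hv, h1⟩
  | alt h1 h2 ih1 ih2 =>
      obtain ⟨v1, hv1, d1⟩ := ih1
      obtain ⟨v2, hv2, d2⟩ := ih2
      exact ⟨_, TsBasic.alt hv1 hv2, Deriv.trans (Deriv.TI3 _ _ _) (Deriv.altCongr d1 d2)⟩

/-- Classification of ts-basic terms by head shape. -/
theorem cls {t : Tm A} (h : TsBasic t) :
    (∃ t₁ t₂, t = .alt t₁ t₂ ∧ TsBasic t₁ ∧ TsBasic t₂) ∨
    (∃ a : ATD A, t = .und a) ∨
    (∃ (a : ATD A) (x : Tm A), a ≠ ATD.delta ∧ TsBasic x ∧ t = .seq (.und a) x) ∨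
    (∃ w, TsBasic w ∧ sz w < sz t ∧ Deriv γ NoAx false t (.delay w)) := by
  cases h with
  | und a n =>
      cases n with
      | zero => exact Or.inr (Or.inl ⟨a, rfl⟩)
      | succ n =>
          refine Or.inr (Or.inr (Or.inr ⟨Tm.delayN n (.und a), TsBasic.und a n, ?_, Deriv.refl _⟩))
          show sz (Tm.delayN n (Tm.und a)) < sz (Tm.delay (Tm.delayN n (Tm.und a)))
          simp
  | pre a n hne hx =>
      cases n with
      | zero => exact Or.inr (Or.inr (Or.inl ⟨a, _, hne, hx, rfl⟩))
      | succ n =>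
          rename_i x
          refine Or.inr (Or.inr (Or.inr ⟨.seq (Tm.delayN n (.und a)) x,
            TsBasic.pre a n hne hx, ?_, Deriv.DRT2 _ _⟩))
          show sz (Tm.seq (Tm.delayN n (Tm.und a)) x)
            < sz (Tm.seq (Tm.delay (Tm.delayN n (Tm.und a))) x)
          simp
  | alt h1 h2 => exact Or.inl ⟨_, _, rfl, h1, h2⟩

/-- Decomposition of a ts-basic term into now-part and delay-part. -/
theorem decomp {t : Tm A} (h : TsBasic t) :
    (∃ p, Deriv γ NoAx false t (.timeout p)) ∨
    (∃ p q, TsBasic q ∧ sz q < sz t ∧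
      Deriv γ NoAx false t (.alt (.timeout p) (.delay q))) := by
  induction h with
  | und a n =>
      cases n with
      | zero => exact Or.inl ⟨.und a, Deriv.symm (Deriv.DRTO1 a)⟩
      | succ n =>
          refine Or.inr ⟨.und .delta, Tm.delayN n (.und a), TsBasic.und a n, ?_, pad _⟩
          show sz (Tm.delayN n (Tm.und a)) < sz (Tm.delay (Tm.delayN n (Tm.und a)))
          simp
  | pre a n hne hx _ih =>
      rename_i x
      cases n with
      | zero => exact Or.inl ⟨_, now_t₂ a x⟩
      | succ n =>
          refine Or.inr ⟨.und .delta, .seq (Tm.delayN n (.und a)) x,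
            TsBasic.pre a n hne hx, ?_, Deriv.trans (Deriv.DRT2 _ _) (pad _)⟩
          show sz (Tm.seq (Tm.delayN n (Tm.und a)) x)
            < sz (Tm.seq (Tm.delay (Tm.delayN n (Tm.und a))) x)
          simp
  | alt h1 h2 ih1 ih2 =>
      rename_i t₁ t₂
      rcases ih1 with ⟨p, d1⟩ | ⟨p, q1, hq1, hs1, d1⟩
      · rcases ih2 with ⟨q, d2⟩ | ⟨q, q2, hq2, hs2, d2⟩
        · exact Or.inl ⟨.alt p q,
            Deriv.trans (Deriv.altCongr d1 d2) (Deriv.symm (Deriv.DRTO2 p q))⟩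
        · refine Or.inr ⟨.alt p q, q2, hq2, by simp; omega, ?_⟩
          exact Deriv.trans (Deriv.altCongr d1 d2)
            (Deriv.trans (Deriv.symm (Deriv.A2 _ _ _))
              (Deriv.altCongr (Deriv.symm (Deriv.DRTO2 p q)) (Deriv.refl _)))
      · rcases ih2 with ⟨q, d2⟩ | ⟨q, q2, hq2, hs2, d2⟩
        · refine Or.inr ⟨.alt q p, q1, hq1, by simp; omega, ?_⟩
          exact Deriv.trans (Deriv.altCongr d1 d2)
            (Deriv.trans (Deriv.A1 _ _)
              (Deriv.trans (Deriv.symm (Deriv.A2 _ _ _))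
                (Deriv.altCongr (Deriv.symm (Deriv.DRTO2 q p)) (Deriv.refl _))))
        · refine Or.inr ⟨.alt p q, .alt q1 q2, TsBasic.alt hq1 hq2, by simp; omega, ?_⟩
          exact Deriv.trans (Deriv.altCongr d1 d2)
            (Deriv.trans (perm4 _ _ _ _)
              (Deriv.altCongr (Deriv.symm (Deriv.DRTO2 p q)) (Deriv.DRT1 q1 q2)))

/-- Main merge-elimination lemma: left merge, communication merge and merge of
ts-basic terms are provably ts-basic, by strong induction on size. -/
theorem triple : ∀ N : ℕ, ∀ t u : Tm A, TsBasic t → TsBasic u → sz t + sz u ≤ N →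
    (∃ v, TsBasic v ∧ Deriv γ NoAx false (.lm t u) v) ∧
    (∃ v, TsBasic v ∧ Deriv γ NoAx false (.cm t u) v) ∧
    (∃ v, TsBasic v ∧ Deriv γ NoAx false (.par t u) v) := by
  intro N
  induction N using Nat.strong_induction_on with
  | _ N IH =>
  have preH : ∀ (a : ATD A) (w : Tm A), TsBasic w →
      ∃ v, TsBasic v ∧ Deriv γ NoAx false (.seq (.und a) w) v := by
    intro a w hw
    rcases eq_or_ne a ATD.delta with rfl | hne
    · exact ⟨_, TsBasic.und ATD.delta 0, Deriv.A7DR w⟩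
    · exact ⟨_, TsBasic.pre a 0 hne hw, Deriv.refl _⟩
  have HLM : ∀ t u : Tm A, TsBasic t → TsBasic u → sz t + sz u ≤ N →
      ∃ v, TsBasic v ∧ Deriv γ NoAx false (.lm t u) v := by
    intro t u ht hu hN
    rcases cls (γ := γ) ht with ⟨t₁, t₂, rfl, h1, h2⟩ | ⟨a, rfl⟩ | ⟨a, x, hne, hx, rfl⟩
      | ⟨w, hw, hszw, hdw⟩
    · have m1 : sz t₁ + sz u < N := by simp at hN; omega
      have m2 : sz t₂ + sz u < N := by simp at hN; omega
      obtain ⟨v1, hv1, d1⟩ := (IH _ m1 t₁ u h1 hu le_rfl).1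
      obtain ⟨v2, hv2, d2⟩ := (IH _ m2 t₂ u h2 hu le_rfl).1
      exact ⟨_, TsBasic.alt hv1 hv2, Deriv.trans (Deriv.CM4 _ _ _) (Deriv.altCongr d1 d2)⟩
    · obtain ⟨v, hv, pd⟩ := preH a u hu
      exact ⟨v, hv, Deriv.trans (Deriv.CM2DR a u) pd⟩
    · have m : sz x + sz u < N := by simp at hN; omega
      obtain ⟨w, hwts, dw⟩ := (IH _ m x u hx hu le_rfl).2.2
      obtain ⟨v, hv, pd⟩ := preH a w hwts
      exact ⟨v, hv, Deriv.trans (Deriv.CM3DR a x u)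
        (Deriv.trans (Deriv.seqCongr (Deriv.refl _) dw) pd)⟩
    · rcases decomp (γ := γ) hu with ⟨p, dp⟩ | ⟨p, q, hq, hszq, dq⟩
      · exact ⟨_, TsBasic.und ATD.delta 0,
          Deriv.trans (Deriv.lmCongr hdw dp) (Deriv.DRCM1 w p)⟩
      · have m : sz w + sz q < N := by omega
        obtain ⟨v1, hv1, d1⟩ := (IH _ m w q hw hq le_rfl).1
        obtain ⟨v, hv, dd⟩ := tsb_delay (γ := γ) hv1
        exact ⟨v, hv, Deriv.trans (Deriv.lmCongr hdw dq)
          (Deriv.trans (Deriv.DRCM2 w p q) (Deriv.trans (Deriv.delayCongr d1) dd))⟩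
  have HCM : ∀ t u : Tm A, TsBasic t → TsBasic u → sz t + sz u ≤ N →
      ∃ v, TsBasic v ∧ Deriv γ NoAx false (.cm t u) v := by
    intro t u ht hu hN
    rcases cls (γ := γ) ht with ⟨t₁, t₂, rfl, g1, g2⟩ | htc
    · have m1 : sz t₁ + sz u < N := by simp at hN; omega
      have m2 : sz t₂ + sz u < N := by simp at hN; omega
      obtain ⟨v1, hv1, d1⟩ := (IH _ m1 t₁ u g1 hu le_rfl).2.1
      obtain ⟨v2, hv2, d2⟩ := (IH _ m2 t₂ u g2 hu le_rfl).2.1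
      exact ⟨_, TsBasic.alt hv1 hv2, Deriv.trans (Deriv.CM8 _ _ _) (Deriv.altCongr d1 d2)⟩
    rcases cls (γ := γ) hu with ⟨u₁, u₂, rfl, h1, h2⟩ | huc
    · have m1 : sz t + sz u₁ < N := by simp at hN; omega
      have m2 : sz t + sz u₂ < N := by simp at hN; omega
      obtain ⟨v1, hv1, d1⟩ := (IH _ m1 t u₁ ht h1 le_rfl).2.1
      obtain ⟨v2, hv2, d2⟩ := (IH _ m2 t u₂ ht h2 le_rfl).2.1
      exact ⟨_, TsBasic.alt hv1 hv2, Deriv.trans (Deriv.CM9 _ _ _) (Deriv.altCongr d1 d2)⟩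
    rcases htc with ⟨a, rfl⟩ | ⟨a, x, hnea, hx, rfl⟩ | ⟨w, hwts, hszw, hdw⟩
    · -- t = und a
      rcases huc with ⟨b, rfl⟩ | ⟨b, y, hneb, hy, rfl⟩ | ⟨w', hw', hszw', hdw'⟩
      · exact ⟨_, TsBasic.und (γ a b) 0, Deriv.CFDR a b⟩
      · obtain ⟨v, hv, pd⟩ := preH (γ a b) y hy
        exact ⟨v, hv, Deriv.trans (Deriv.CM6DR a b y)
          (Deriv.trans (Deriv.seqCongr (Deriv.CFDR a b) (Deriv.refl _)) pd)⟩
      · exact ⟨_, TsBasic.und ATD.delta 0,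
          Deriv.trans (Deriv.cmCongr (now_t₁ a) hdw') (Deriv.DRCM3 _ _)⟩
    · -- t = seq (und a) x
      rcases huc with ⟨b, rfl⟩ | ⟨b, y, hneb, hy, rfl⟩ | ⟨w', hw', hszw', hdw'⟩
      · obtain ⟨v, hv, pd⟩ := preH (γ a b) x hx
        exact ⟨v, hv, Deriv.trans (Deriv.CM5DR a b x)
          (Deriv.trans (Deriv.seqCongr (Deriv.CFDR a b) (Deriv.refl _)) pd)⟩
      · have m : sz x + sz y < N := by simp at hN; omega
        obtain ⟨w, hwts2, dpar⟩ := (IH _ m x y hx hy le_rfl).2.2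
        obtain ⟨v, hv, pd⟩ := preH (γ a b) w hwts2
        exact ⟨v, hv, Deriv.trans (Deriv.CM7DR a b x y)
          (Deriv.trans (Deriv.seqCongr (Deriv.CFDR a b) dpar) pd)⟩
      · exact ⟨_, TsBasic.und ATD.delta 0,
          Deriv.trans (Deriv.cmCongr (now_t₂ a x) hdw') (Deriv.DRCM3 _ _)⟩
    · -- t ~ delay w
      rcases huc with ⟨b, rfl⟩ | ⟨b, y, hneb, hy, rfl⟩ | ⟨w', hw', hszw', hdw'⟩
      · exact ⟨_, TsBasic.und ATD.delta 0,
          Deriv.trans (Deriv.cmCongr hdw (now_t₁ b)) (Deriv.DRCM4 _ _)⟩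
      · exact ⟨_, TsBasic.und ATD.delta 0,
          Deriv.trans (Deriv.cmCongr hdw (now_t₂ b y)) (Deriv.DRCM4 _ _)⟩
      · have m : sz w + sz w' < N := by omega
        obtain ⟨v1, hv1, d1⟩ := (IH _ m w w' hwts hw' le_rfl).2.1
        obtain ⟨v, hv, dd⟩ := tsb_delay (γ := γ) hv1
        exact ⟨v, hv, Deriv.trans (Deriv.cmCongr hdw hdw')
          (Deriv.trans (Deriv.DRCM5 w w') (Deriv.trans (Deriv.delayCongr d1) dd))⟩
  intro t u ht hu hN
  refine ⟨HLM t u ht hu hN, HCM t u ht hu hN, ?_⟩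
  obtain ⟨v1, hv1, d1⟩ := HLM t u ht hu hN
  obtain ⟨v2, hv2, d2⟩ := HLM u t hu ht (by omega)
  obtain ⟨v3, hv3, d3⟩ := HCM t u ht hu hN
  exact ⟨_, TsBasic.alt (TsBasic.alt hv1 hv2) hv3,
    Deriv.trans (Deriv.CM1 t u) (Deriv.altCongr (Deriv.altCongr d1 d2) d3)⟩

end ElimAux

/-- Every closed ACP_drt^τ term is provably equal, in the equational theory
ACP_drt^τ, to a ts-basic term. -/
theorem elimination_to_ts_basic {A : Type} [Fintype A]
    (γ : ATD A → ATD A → ATD A)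
    (hγcomm : ∀ a b, γ a b = γ b a)
    (hγassoc : ∀ a b c, γ (γ a b) c = γ a (γ b c))
    (hγtau : ∀ a, γ ATD.tau a = ATD.delta)
    (hγdelta : ∀ a, γ ATD.delta a = ATD.delta)
    (t : Tm A) (ht : Tm.Plain t) :
    ∃ t' : Tm A, TsBasic t' ∧ Deriv γ NoAx false t t' := by
  suffices h : ∀ s : Tm A, Tm.Plain s →
      ∃ s' : Tm A, TsBasic s' ∧ Deriv γ NoAx false s s' by exact h t ht
  intro s
  induction s with
  | und a => exact fun _ => ⟨_, TsBasic.und a 0, Deriv.refl _⟩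
  | alt t u iht ihu =>
      intro hp
      obtain ⟨h1, h2⟩ := hp
      obtain ⟨t', ht', dt⟩ := iht h1
      obtain ⟨u', hu', du⟩ := ihu h2
      exact ⟨_, TsBasic.alt ht' hu', Deriv.altCongr dt du⟩
  | seq t u iht ihu =>
      intro hp
      obtain ⟨h1, h2⟩ := hp
      obtain ⟨t', ht', dt⟩ := iht h1
      obtain ⟨u', hu', du⟩ := ihu h2
      obtain ⟨v, hv, dv⟩ := ElimAux.tsb_seq (γ := γ) ht' hu'
      exact ⟨v, hv, Deriv.trans (Deriv.seqCongr dt du) dv⟩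
  | delay t iht =>
      intro hp
      obtain ⟨t', ht', dt⟩ := iht hp
      obtain ⟨v, hv, dv⟩ := ElimAux.tsb_delay (γ := γ) ht'
      exact ⟨v, hv, Deriv.trans (Deriv.delayCongr dt) dv⟩
  | par t u iht ihu =>
      intro hp
      obtain ⟨h1, h2⟩ := hp
      obtain ⟨t', ht', dt⟩ := iht h1
      obtain ⟨u', hu', du⟩ := ihu h2
      obtain ⟨v, hv, dv⟩ :=
        (ElimAux.triple (γ := γ) _ t' u' ht' hu' le_rfl).2.2
      exact ⟨v, hv, Deriv.trans (Deriv.parCongr dt du) dv⟩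
  | lm t u iht ihu =>
      intro hp
      obtain ⟨h1, h2⟩ := hp
      obtain ⟨t', ht', dt⟩ := iht h1
      obtain ⟨u', hu', du⟩ := ihu h2
      obtain ⟨v, hv, dv⟩ :=
        (ElimAux.triple (γ := γ) _ t' u' ht' hu' le_rfl).1
      exact ⟨v, hv, Deriv.trans (Deriv.lmCongr dt du) dv⟩
  | cm t u iht ihu =>
      intro hp
      obtain ⟨h1, h2⟩ := hp
      obtain ⟨t', ht', dt⟩ := iht h1
      obtain ⟨u', hu', du⟩ := ihu h2
      obtain ⟨v, hv, dv⟩ :=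
        (ElimAux.triple (γ := γ) _ t' u' ht' hu' le_rfl).2.1
      exact ⟨v, hv, Deriv.trans (Deriv.cmCongr dt du) dv⟩
  | encap H t iht =>
      intro hp
      obtain ⟨t', ht', dt⟩ := iht hp
      obtain ⟨v, hv, dv⟩ := ElimAux.tsb_encap (γ := γ) H ht'
      exact ⟨v, hv, Deriv.trans (Deriv.encapCongr H dt) dv⟩
  | abstr I t iht =>
      intro hp
      obtain ⟨t', ht', dt⟩ := iht hp
      obtain ⟨v, hv, dv⟩ := ElimAux.tsb_abstr (γ := γ) I ht'
      exact ⟨v, hv, Deriv.trans (Deriv.abstrCongr I dt) dv⟩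
  | timeout t iht =>
      intro hp
      obtain ⟨t', ht', dt⟩ := iht hp
      obtain ⟨v, hv, dv⟩ := ElimAux.tsb_timeout (γ := γ) ht'
      exact ⟨v, hv, Deriv.trans (Deriv.timeoutCongr dt) dv⟩
  | var X => exact fun hp => False.elim hp
  | recc E X _ => exact fun hp => False.elim hp
  | shift t _ => exact fun hp => False.elim hp
  | tfp t _ => exact fun hp => False.elim hp
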